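/- Weighted dyadic ℓ^p–L^p comparability: let n ≥ 1, 1 < p < ∞, p' = p/(p−1), and let s ∈ ℝ satisfy s > −n/p'. Then there exists a constant C ≥ 1, depending only on n, p, s, such that for every sequence (a_j)_{j ∈ ℤ} of nonnegative reals one has C^{−1} Σ_{j∈ℤ} a_j^p ≤ ∫_{ℝ^n} ( Σ_{j∈ℤ} a_j · 2^{(s + n/p') j} · (2^j + |x|)^{−n−s} )^p dx ≤ C Σ_{j∈ℤ} a_j^p (all quantities interpreted in [0,∞]). -/

import Mathlib

open MeasureTheory Filter
open scoped ENNReal Topology BigOperators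

noncomputable section

abbrev Euc (n : ℕ) := EuclideanSpace ℝ (Fin n)

/-- The dyadically rescaled kernel `x ↦ 2^{(s+n/p')j}(2^j + |x|)^{-n-s}`,
where `p' = p/(p-1)`. -/
def kern (n : ℕ) (p s : ℝ) (j : ℤ) (x : Euc n) : ℝ :=
  (2 : ℝ) ^ ((s + n / (p / (p - 1))) * (j : ℝ))
    * ((2 : ℝ) ^ (j : ℝ) + ‖x‖) ^ (-(n : ℝ) - s)

/-!
Split `ℝⁿ ∖ {0}` into the dyadic shells `2^k ≤ |x| < 2^(k+1)` and put `τ = s + n/p' > 0`,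
`β = n/p`. On the `k`-th shell the `j`-th kernel `K_j` is at most `2^(-βk) 2^(-δ|k-j|)` with
`δ = min τ β > 0`, while the `k`-th kernel is at least a constant times `2^(-βk)`. The shell has
`2^(nk)` times the volume of the unit shell and `2^(-βkp) = 2^(-nk)`, so the shell contributes to
`∫ (∑ a_j K_j)^p` at least a constant times `a_k^p` and at most a constant times
`(∑_j 2^(-δ|k-j|) a_j)^p`. Summing over `k`, Young's inequality `ℓ¹ * ℓ^p ⊆ ℓ^p` bounds the latter
by `∑ a_j^p`.
-/

open Set Module Function Pointwise

namespace ENNReal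

variable {ι : Type*}

theorem tsum_mul_le_weight_mul_Lp (w f : ι → ℝ≥0∞) {p : ℝ} (hp : 1 ≤ p) :
    ∑' i, w i * f i ≤ (∑' i, w i) ^ (1 - p⁻¹) * (∑' i, w i * f i ^ p) ^ p⁻¹ := by
  rw [ENNReal.tsum_eq_iSup_sum]
  refine iSup_le fun s => (inner_le_weight_mul_Lp_of_nonneg s hp w f).trans ?_
  have : 0 ≤ 1 - p⁻¹ := sub_nonneg.2 (inv_le_one_of_one_le₀ hp)
  gcongr <;> exact ENNReal.sum_le_tsum s

theorem tsum_mul_rpow_le (w f : ι → ℝ≥0∞) {p : ℝ} (hp : 1 ≤ p) :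
    (∑' i, w i * f i) ^ p ≤ (∑' i, w i) ^ (p - 1) * ∑' i, w i * f i ^ p := by
  have hp₀ : 0 < p := zero_lt_one.trans_le hp
  calc (∑' i, w i * f i) ^ p
      ≤ ((∑' i, w i) ^ (1 - p⁻¹) * (∑' i, w i * f i ^ p) ^ p⁻¹) ^ p := by
        gcongr; exact tsum_mul_le_weight_mul_Lp w f hp
    _ = (∑' i, w i) ^ (p - 1) * ∑' i, w i * f i ^ p := by
        rw [mul_rpow_of_nonneg _ _ hp₀.le, ← rpow_mul, ← rpow_mul, sub_mul, one_mul,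
          inv_mul_cancel₀ hp₀.ne', rpow_one]

theorem tsum_conv_rpow_le {G : Type*} [AddGroup G] (w b : G → ℝ≥0∞) {p : ℝ} (hp : 1 ≤ p) :
    ∑' k, (∑' j, w (k - j) * b j) ^ p ≤ (∑' m, w m) ^ p * ∑' j, b j ^ p := by
  have hleft (k : G) : ∑' j, w (k - j) = ∑' m, w m := (Equiv.subLeft k).tsum_eq w
  have hright (j : G) : ∑' k, w (k - j) = ∑' m, w m := (Equiv.subRight j).tsum_eq w
  calc ∑' k, (∑' j, w (k - j) * b j) ^ p
      ≤ ∑' k, (∑' m, w m) ^ (p - 1) * ∑' j, w (k - j) * b j ^ p :=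
        ENNReal.tsum_le_tsum fun k => hleft k ▸ tsum_mul_rpow_le _ b hp
    _ = (∑' m, w m) ^ (p - 1) * ((∑' m, w m) * ∑' j, b j ^ p) := by
        rw [ENNReal.tsum_mul_left, ENNReal.tsum_comm]
        simp_rw [ENNReal.tsum_mul_right, hright, ENNReal.tsum_mul_left]
    _ = (∑' m, w m) ^ p * ∑' j, b j ^ p := by
        rw [← mul_assoc]
        congr 1
        simpa using (rpow_add_of_nonneg (x := ∑' m, w m) _ _ (sub_nonneg.2 hp) zero_le_one).symm

theorem exists_one_le_inv_ofReal_le_and_le_ofReal {c C : ℝ≥0∞} (hc : c ≠ 0) (hC : C ≠ ⊤) :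
    ∃ K : ℝ, 1 ≤ K ∧ (ENNReal.ofReal K)⁻¹ ≤ c ∧ C ≤ ENNReal.ofReal K := by
  refine ⟨max 1 (max C.toReal c⁻¹.toReal), le_max_left _ _, ?_, ?_⟩
  · rw [inv_le_iff_inv_le, le_ofReal_iff_toReal_le (inv_ne_top.2 hc)
      (zero_le_one.trans (le_max_left _ _))]
    exact le_max_of_le_right (le_max_right _ _)
  · rw [le_ofReal_iff_toReal_le hC (zero_le_one.trans (le_max_left _ _))]
    exact le_max_of_le_right (le_max_left _ _)

end ENNReal

theorem tsum_ofReal_two_rpow_neg_mul_abs_ne_top {δ : ℝ} (hδ : 0 < δ) :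
    ∑' m : ℤ, ENNReal.ofReal (2 ^ (-δ * |(m : ℝ)|)) ≠ ⊤ := by
  have hpow (m : ℤ) : (2 : ℝ) ^ (-δ * |(m : ℝ)|) = ((2 : ℝ) ^ (-δ)) ^ m.natAbs := by
    rw [← Real.rpow_natCast, ← Real.rpow_mul zero_le_two, Nat.cast_natAbs, Int.cast_abs]
  have hgeom : Summable fun k : ℕ => ((2 : ℝ) ^ (-δ)) ^ k :=
    summable_geometric_of_lt_one (Real.rpow_nonneg zero_le_two _)
      (Real.rpow_lt_one_of_one_lt_of_neg one_lt_two (neg_neg_of_pos hδ))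
  have hsum : Summable fun m : ℤ => (2 : ℝ) ^ (-δ * |(m : ℝ)|) := by
    simp_rw [hpow]
    exact .of_nat_of_neg (by simpa using hgeom) (by simpa using hgeom)
  rw [← ENNReal.ofReal_tsum_of_nonneg (fun _ => Real.rpow_nonneg zero_le_two _) hsum]
  exact ENNReal.ofReal_ne_top

section DyadicShell

variable {E : Type*} [NormedAddCommGroup E]

def dyadicShell (k : ℤ) : Set E := (‖·‖) ⁻¹' Ico ((2 : ℝ) ^ k) (2 ^ (k + 1))

theorem mem_dyadicShell {k : ℤ} {x : E} :
    x ∈ dyadicShell k ↔ (2 : ℝ) ^ k ≤ ‖x‖ ∧ ‖x‖ < 2 ^ (k + 1) :=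
  Iff.rfl

theorem pairwise_disjoint_dyadicShell : Pairwise (Disjoint on (dyadicShell : ℤ → Set E)) := by
  refine fun k l hkl => Set.disjoint_left.2 fun x hk hl => hkl (le_antisymm ?_ ?_)
  · exact Int.lt_add_one_iff.1 ((zpow_lt_zpow_iff_right₀ one_lt_two).1 (hk.1.trans_lt hl.2))
  · exact Int.lt_add_one_iff.1 ((zpow_lt_zpow_iff_right₀ one_lt_two).1 (hl.1.trans_lt hk.2))

theorem iUnion_dyadicShell : ⋃ k, (dyadicShell k : Set E) = {0}ᶜ := by
  ext x
  simp only [mem_iUnion, mem_compl_singleton_iff, ← norm_pos_iff]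
  refine ⟨fun ⟨k, hk⟩ => (zpow_pos two_pos k).trans_le hk.1, fun hx => ?_⟩
  exact exists_mem_Ico_zpow hx one_lt_two

theorem dyadicShell_zero_subset_closedBall : (dyadicShell 0 : Set E) ⊆ Metric.closedBall 0 2 :=
  fun x hx => by simpa using hx.2.le

theorem ball_subset_dyadicShell_zero {x : E} (hx : ‖x‖ = 3 / 2) :
    Metric.ball x (1 / 2) ⊆ dyadicShell 0 := by
  intro y hy
  rw [Metric.mem_ball, dist_eq_norm] at hy
  have h₁ := norm_sub_norm_le x y
  have h₂ := norm_sub_norm_le y x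
  rw [norm_sub_rev] at h₁
  constructor <;> norm_num <;> linarith

theorem measurableSet_dyadicShell [MeasurableSpace E] [OpensMeasurableSpace E] (k : ℤ) :
    MeasurableSet (dyadicShell k : Set E) :=
  measurableSet_Ico.preimage measurable_norm

theorem lintegral_eq_tsum_dyadicShell [MeasurableSpace E] [OpensMeasurableSpace E] (μ : Measure E)
    [NullSingletonClass μ] (f : E → ℝ≥0∞) :
    ∫⁻ x, f x ∂μ = ∑' k, ∫⁻ x in dyadicShell k, f x ∂μ := by
  rw [← lintegral_iUnion measurableSet_dyadicShell pairwise_disjoint_dyadicShell,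
    iUnion_dyadicShell, restrict_compl_singleton]

theorem measure_dyadicShell_zero_lt_top [ProperSpace E] [MeasurableSpace E] (μ : Measure E)
    [IsFiniteMeasureOnCompacts μ] :
    μ (dyadicShell 0) < ⊤ :=
  (measure_mono dyadicShell_zero_subset_closedBall).trans_lt measure_closedBall_lt_top

variable [NormedSpace ℝ E]

theorem dyadicShell_eq_smul (k : ℤ) :
    (dyadicShell k : Set E) = (2 : ℝ) ^ k • (dyadicShell 0 : Set E) := by
  have h2k : (0 : ℝ) < 2 ^ k := zpow_pos two_pos k
  ext x
  rw [mem_smul_set_iff_inv_smul_mem₀ h2k.ne', mem_dyadicShell, mem_dyadicShell, norm_smul,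
    norm_inv, Real.norm_of_nonneg h2k.le, zero_add, zpow_zero, zpow_one, zpow_add_one₀ two_ne_zero,
    le_inv_mul_iff₀ h2k, inv_mul_lt_iff₀ h2k, mul_one]

variable [MeasurableSpace E] (μ : Measure E)

theorem measure_dyadicShell_zero_pos [Nontrivial E] [μ.IsOpenPosMeasure] :
    0 < μ (dyadicShell 0) := by
  obtain ⟨x, hx⟩ := exists_norm_eq E (by norm_num : (0 : ℝ) ≤ 3 / 2)
  exact (Metric.measure_ball_pos μ x (by norm_num)).trans_le
    (measure_mono (ball_subset_dyadicShell_zero hx))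

variable [FiniteDimensional ℝ E] [BorelSpace E] [μ.IsAddHaarMeasure]

theorem ofReal_rpow_mul_addHaar_dyadicShell {p : ℝ} (hp : 0 < p) (k : ℤ) :
    ENNReal.ofReal (2 ^ (-(finrank ℝ E / p) * k)) ^ p * μ (dyadicShell k) = μ (dyadicShell 0) := by
  have hscale : |((2 : ℝ) ^ k) ^ finrank ℝ E| = 2 ^ ((finrank ℝ E : ℝ) * k) := by
    rw [abs_of_pos (by positivity), ← Real.rpow_intCast, ← Real.rpow_natCast,
      ← Real.rpow_mul zero_le_two, mul_comm]
  rw [dyadicShell_eq_smul k, Measure.addHaar_smul, hscale, ← mul_assoc,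
    ENNReal.ofReal_rpow_of_nonneg (by positivity) hp.le, ← Real.rpow_mul zero_le_two,
    ← ENNReal.ofReal_mul (by positivity), ← Real.rpow_add two_pos]
  field_simp
  simp

theorem setLIntegral_dyadicShell_rpow_le {p : ℝ} (hp : 0 < p) {f : E → ℝ≥0∞} {c : ℝ≥0∞} {k : ℤ}
    (hf : ∀ x ∈ dyadicShell k, f x ≤ ENNReal.ofReal (2 ^ (-(finrank ℝ E / p) * k)) * c) :
    ∫⁻ x in dyadicShell k, f x ^ p ∂μ ≤ μ (dyadicShell 0) * c ^ p :=
  calc ∫⁻ x in dyadicShell k, f x ^ p ∂μ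
      ≤ ∫⁻ _ in dyadicShell k, (ENNReal.ofReal (2 ^ (-(finrank ℝ E / p) * k)) * c) ^ p ∂μ :=
        setLIntegral_mono' (measurableSet_dyadicShell k) fun x hx => by gcongr; exact hf x hx
    _ = μ (dyadicShell 0) * c ^ p := by
        rw [setLIntegral_const, ENNReal.mul_rpow_of_nonneg _ _ hp.le, mul_right_comm,
          ofReal_rpow_mul_addHaar_dyadicShell μ hp]

theorem le_setLIntegral_dyadicShell_rpow {p : ℝ} (hp : 0 < p) {f : E → ℝ≥0∞} {c : ℝ≥0∞} {k : ℤ}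
    (hf : ∀ x ∈ dyadicShell k, ENNReal.ofReal (2 ^ (-(finrank ℝ E / p) * k)) * c ≤ f x) :
    μ (dyadicShell 0) * c ^ p ≤ ∫⁻ x in dyadicShell k, f x ^ p ∂μ :=
  calc μ (dyadicShell 0) * c ^ p
      = ∫⁻ _ in dyadicShell k, (ENNReal.ofReal (2 ^ (-(finrank ℝ E / p) * k)) * c) ^ p ∂μ := by
        rw [setLIntegral_const, ENNReal.mul_rpow_of_nonneg _ _ hp.le, mul_right_comm,
          ofReal_rpow_mul_addHaar_dyadicShell μ hp]
    _ ≤ ∫⁻ x in dyadicShell k, f x ^ p ∂μ :=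
        setLIntegral_mono' (measurableSet_dyadicShell k) fun x hx => by gcongr; exact hf x hx

variable [Nontrivial E]

theorem lintegral_rpow_tsum_mul_le {p : ℝ} (hp : 1 ≤ p) {K : ℤ → E → ℝ≥0∞} {w : ℤ → ℝ≥0∞}
    (hK : ∀ k j, ∀ x ∈ dyadicShell k,
      K j x ≤ ENNReal.ofReal (2 ^ (-(finrank ℝ E / p) * k)) * w (k - j))
    (b : ℤ → ℝ≥0∞) :
    ∫⁻ x, (∑' j, b j * K j x) ^ p ∂μ ≤ μ (dyadicShell 0) * (∑' m, w m) ^ p * ∑' j, b j ^ p := by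
  have hp₀ : 0 < p := zero_lt_one.trans_le hp
  rw [lintegral_eq_tsum_dyadicShell μ, mul_assoc]
  calc ∑' k, ∫⁻ x in dyadicShell k, (∑' j, b j * K j x) ^ p ∂μ
      ≤ ∑' k, μ (dyadicShell 0) * (∑' j, w (k - j) * b j) ^ p := by
        refine ENNReal.tsum_le_tsum fun k => setLIntegral_dyadicShell_rpow_le μ hp₀ fun x hx => ?_
        rw [← ENNReal.tsum_mul_left]
        refine ENNReal.tsum_le_tsum fun j => ?_
        calc b j * K j x
            ≤ b j * (ENNReal.ofReal (2 ^ (-(finrank ℝ E / p) * k)) * w (k - j)) := by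
              gcongr; exact hK k j x hx
          _ = _ := by ring
    _ = μ (dyadicShell 0) * ∑' k, (∑' j, w (k - j) * b j) ^ p := ENNReal.tsum_mul_left
    _ ≤ μ (dyadicShell 0) * ((∑' m, w m) ^ p * ∑' j, b j ^ p) := by
        gcongr; exact ENNReal.tsum_conv_rpow_le w b hp

theorem le_lintegral_rpow_tsum_mul {p : ℝ} (hp : 0 < p) {K : ℤ → E → ℝ≥0∞} {m : ℝ≥0∞}
    (hK : ∀ k, ∀ x ∈ dyadicShell k, ENNReal.ofReal (2 ^ (-(finrank ℝ E / p) * k)) * m ≤ K k x)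
    (b : ℤ → ℝ≥0∞) :
    μ (dyadicShell 0) * m ^ p * ∑' j, b j ^ p ≤ ∫⁻ x, (∑' j, b j * K j x) ^ p ∂μ := by
  rw [lintegral_eq_tsum_dyadicShell μ, ← ENNReal.tsum_mul_left]
  refine ENNReal.tsum_le_tsum fun k => ?_
  rw [mul_assoc, ← ENNReal.mul_rpow_of_nonneg _ _ hp.le]
  refine le_setLIntegral_dyadicShell_rpow μ hp fun x hx => ?_
  calc ENNReal.ofReal (2 ^ (-(finrank ℝ E / p) * k)) * (m * b k)
      = b k * (ENNReal.ofReal (2 ^ (-(finrank ℝ E / p) * k)) * m) := by ring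
    _ ≤ b k * K k x := by gcongr; exact hK k x hx
    _ ≤ ∑' j, b j * K j x := ENNReal.le_tsum k

end DyadicShell

theorem two_rpow_mul_add_rpow_neg_le {τ β j k t : ℝ} (hτβ : 0 ≤ τ + β) (ht : 2 ^ k ≤ t) :
    2 ^ (τ * j) * (2 ^ j + t) ^ (-(τ + β)) ≤ 2 ^ (-β * k) * 2 ^ (-min τ β * |k - j|) := by
  have hmax : (2 : ℝ) ^ max j k ≤ 2 ^ j + t := by
    have := Real.rpow_pos_of_pos two_pos j
    have := Real.rpow_pos_of_pos two_pos k
    rcases max_cases j k with ⟨h, _⟩ | ⟨h, _⟩ <;> rw [h] <;> linarith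
  have hexp : τ * j - (τ + β) * max j k ≤ -β * k + -min τ β * |k - j| := by
    rcases le_total j k with h | h
    · rw [max_eq_right h, abs_of_nonneg (sub_nonneg.2 h)]
      nlinarith [mul_nonneg (sub_nonneg.2 (min_le_left τ β)) (sub_nonneg.2 h)]
    · rw [max_eq_left h, abs_of_nonpos (sub_nonpos.2 h)]
      nlinarith [mul_nonneg (sub_nonneg.2 (min_le_right τ β)) (sub_nonneg.2 h)]
  calc (2 : ℝ) ^ (τ * j) * (2 ^ j + t) ^ (-(τ + β))
      ≤ 2 ^ (τ * j) * ((2 : ℝ) ^ max j k) ^ (-(τ + β)) := by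
        refine mul_le_mul_of_nonneg_left ?_ (by positivity)
        exact Real.rpow_le_rpow_of_nonpos (by positivity) hmax (by linarith)
    _ = 2 ^ (τ * j - (τ + β) * max j k) := by
        rw [← Real.rpow_mul zero_le_two, ← Real.rpow_add two_pos]; ring_nf
    _ ≤ 2 ^ (-β * k + -min τ β * |k - j|) := Real.rpow_le_rpow_of_exponent_le one_le_two hexp
    _ = 2 ^ (-β * k) * 2 ^ (-min τ β * |k - j|) := Real.rpow_add two_pos _ _

theorem two_rpow_neg_mul_le_two_rpow_mul_add_rpow_neg {τ β k t : ℝ} (hτβ : 0 ≤ τ + β)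
    (ht₀ : 0 ≤ t) (ht : t ≤ 2 ^ (k + 1)) :
    2 ^ (-β * k) * 2 ^ (-2 * (τ + β)) ≤ 2 ^ (τ * k) * (2 ^ k + t) ^ (-(τ + β)) := by
  have hsum : 2 ^ k + t ≤ (2 : ℝ) ^ (k + 2) := by
    have := Real.rpow_pos_of_pos two_pos k
    rw [Real.rpow_add two_pos] at ht ⊢
    norm_num at ht ⊢
    linarith
  calc (2 : ℝ) ^ (-β * k) * 2 ^ (-2 * (τ + β))
      = 2 ^ (τ * k) * ((2 : ℝ) ^ (k + 2)) ^ (-(τ + β)) := by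
        rw [← Real.rpow_mul zero_le_two, ← Real.rpow_add two_pos, ← Real.rpow_add two_pos]
        ring_nf
    _ ≤ 2 ^ (τ * k) * (2 ^ k + t) ^ (-(τ + β)) := by
        refine mul_le_mul_of_nonneg_left ?_ (by positivity)
        exact Real.rpow_le_rpow_of_nonpos (by positivity) hsum (by linarith)

section Kern

variable {n : ℕ} {p s : ℝ}

theorem kern_eq (hp : 1 < p) (j : ℤ) (x : Euc n) :
    kern n p s j x = 2 ^ ((s + n / (p / (p - 1))) * j)
      * (2 ^ (j : ℝ) + ‖x‖) ^ (-((s + n / (p / (p - 1))) + n / p)) := by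
  have : p - 1 ≠ 0 := sub_ne_zero.2 hp.ne'
  have : p ≠ 0 := (zero_lt_one.trans hp).ne'
  unfold kern
  congr 2
  field_simp
  ring

theorem ofReal_kern_le (hp : 1 < p) (hs : -(n / (p / (p - 1))) < s) {k j : ℤ} {x : Euc n}
    (hx : x ∈ dyadicShell k) :
    ENNReal.ofReal (kern n p s j x) ≤ ENNReal.ofReal (2 ^ (-(n / p) * k))
      * ENNReal.ofReal (2 ^ (-min (s + n / (p / (p - 1))) (n / p) * |((k - j : ℤ) : ℝ)|)) := by
  rw [← ENNReal.ofReal_mul (by positivity), kern_eq hp, Int.cast_sub]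
  refine ENNReal.ofReal_le_ofReal (two_rpow_mul_add_rpow_neg_le ?_ ?_)
  · have : 0 ≤ (n : ℝ) / p := by positivity
    linarith
  · simpa [Real.rpow_intCast] using hx.1

theorem le_ofReal_kern (hp : 1 < p) (hs : -(n / (p / (p - 1))) < s) {k : ℤ} {x : Euc n}
    (hx : x ∈ dyadicShell k) :
    ENNReal.ofReal (2 ^ (-(n / p) * k))
      * ENNReal.ofReal (2 ^ (-2 * (s + n / (p / (p - 1)) + n / p))) ≤
      ENNReal.ofReal (kern n p s k x) := by
  rw [← ENNReal.ofReal_mul (by positivity), kern_eq hp]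
  refine ENNReal.ofReal_le_ofReal
    (two_rpow_neg_mul_le_two_rpow_mul_add_rpow_neg ?_ (norm_nonneg x) ?_)
  · have : 0 ≤ (n : ℝ) / p := by positivity
    linarith
  · simpa [← Real.rpow_intCast] using hx.2.le

end Kern

/-- Weighted dyadic `ℓ^p`–`L^p` comparability: for `1 < p < ∞` and
`s > -n/p'`, the `L^p(ℝ^n)` norm (to the `p`-th power) of
`∑_j a_j 2^{(s+n/p')j}(2^j+|x|)^{-n-s}` is comparable to `∑_j a_j^p`. -/
theorem dyadic_kernel_lp_comparability
    (n : ℕ) (hn : 1 ≤ n) (p s : ℝ) (hp : 1 < p)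
    (hs : -(n / (p / (p - 1))) < s) :
    ∃ C : ℝ, 1 ≤ C ∧
      ∀ a : ℤ → ℝ, (∀ j : ℤ, 0 ≤ a j) →
        (ENNReal.ofReal C)⁻¹ * (∑' j : ℤ, ENNReal.ofReal (a j ^ p))
            ≤ (∫⁻ x : Euc n,
                (∑' j : ℤ, ENNReal.ofReal (a j * kern n p s j x)) ^ p) ∧
        (∫⁻ x : Euc n,
            (∑' j : ℤ, ENNReal.ofReal (a j * kern n p s j x)) ^ p)
          ≤ ENNReal.ofReal C * ∑' j : ℤ, ENNReal.ofReal (a j ^ p) := by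
  have : Nonempty (Fin n) := ⟨⟨0, hn⟩⟩
  have hp₀ : 0 < p := zero_lt_one.trans hp
  have hd : (finrank ℝ (Euc n) : ℝ) / p = n / p := by simp
  set τ := s + n / (p / (p - 1)) with hτ
  set w : ℤ → ℝ≥0∞ := fun m => ENNReal.ofReal (2 ^ (-min τ (n / p) * |(m : ℝ)|))
  have hw : ∑' m, w m ≠ ⊤ :=
    tsum_ofReal_two_rpow_neg_mul_abs_ne_top (lt_min (by rw [hτ]; linarith) (by positivity))
  obtain ⟨C, hC, hlower, hupper⟩ := ENNReal.exists_one_le_inv_ofReal_le_and_le_ofReal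
    (c := volume (dyadicShell 0 : Set (Euc n)) * ENNReal.ofReal (2 ^ (-2 * (τ + n / p))) ^ p)
    (C := volume (dyadicShell 0 : Set (Euc n)) * (∑' m, w m) ^ p)
    (mul_ne_zero (measure_dyadicShell_zero_pos volume).ne' (by positivity))
    (ENNReal.mul_ne_top (measure_dyadicShell_zero_lt_top volume).ne
      (ENNReal.rpow_ne_top_of_nonneg hp₀.le hw))
  refine ⟨C, hC, fun a ha => ?_⟩
  have hF (x : Euc n) : ∑' j, ENNReal.ofReal (a j * kern n p s j x)
      = ∑' j, ENNReal.ofReal (a j) * ENNReal.ofReal (kern n p s j x) :=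
    tsum_congr fun j => ENNReal.ofReal_mul (ha j)
  have hS : ∑' j, ENNReal.ofReal (a j ^ p) = ∑' j, ENNReal.ofReal (a j) ^ p :=
    tsum_congr fun j => (ENNReal.ofReal_rpow_of_nonneg (ha j) hp₀.le).symm
  simp only [hF, hS]
  constructor
  · refine (mul_le_mul_left hlower _).trans (le_lintegral_rpow_tsum_mul volume hp₀ ?_ _)
    exact fun k x hx => hd ▸ le_ofReal_kern hp hs hx
  · refine (lintegral_rpow_tsum_mul_le volume hp.le ?_ _).trans (mul_le_mul_left hupper _)
    exact fun k j x hx => hd ▸ ofReal_kern_le hp hs hx
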